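/- (i) The n×r matrix Q with (i,j)-entry ∂d_{n-1-i}/∂b_{r-1-j} equals the first r columns of the n×n matrix −B^{-1}·D̂ (B is invertible over R since L_n is nilpotent); in particular ∂d_i/∂b_j depends only on the difference i − j, for 0 ≤ i ≤ n−1 and 0 ≤ j ≤ r−1. (ii) If q_1 ≥ 2, then for all 0 ≤ i ≤ r−1 and 0 ≤ j ≤ r−1, the polynomial ∂d_i/∂b_j lies in the ideal of R generated by ∂d_{r-1}/∂b_0, …, ∂d_{r-1}/∂b_{r-1} and d_1,…,d_{r-1}. -/

import Mathlib

/-! Write `B`, `D`, `A` for the power series `1 + b_{r-1}t + ⋯`, `1 + d_{n-1}t + ⋯`,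
`1 + a_{n-1}t + ⋯`, so that `B·D ≡ A (mod t^{n+1})`. Differentiating coefficientwise in `b_j`
kills `A` and turns `B` into `t^{r-j}`; multiplying by `B⁻¹` gives
`∂D/∂b_j ≡ -t^{r-j}·B⁻¹D (mod t^{n+1})`, that is `∂d_i/∂b_j = -c_{n-i-r+j}` with `c_m` the
coefficients of `B⁻¹D`. This depends only on `i - j`, and lower-triangular Toeplitz matrices
multiply like power series truncated at `t^n`, which gives (i).

For (ii), the generators `∂d_{r-1}/∂b_j` are the `-c_m` with `n-2r < m ≤ n-r`, and for
`n-r < m < n` the identity `D = B·(B⁻¹D)` expresses `c_m` through `d_{n-m}` and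
`c_{m-1}, …, c_{m-r}`. When `q_1 ≥ 2` all these indices are non-negative, so by induction every
`c_m` with `n-2r < m < n` lies in the ideal. -/

open MvPolynomial Matrix

noncomputable section

namespace TB

/-- The polynomial ring `ℂ[a_0,…,a_{n-1},b_0,…,b_{r-1}]`: variable `Sum.inl i` is `a_i`
and `Sum.inr j` is `b_j`. -/
abbrev R (n r : ℕ) : Type := MvPolynomial (Fin n ⊕ Fin r) ℂ

/-- The power series `1 + (cf 1)·t + ⋯ + (cf m)·t^m`. -/
def ser {A : Type*} [CommRing A] (m : ℕ) (cf : ℕ → A) : PowerSeries A :=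
  PowerSeries.mk fun k => if k = 0 then 1 else if k ≤ m then cf k else 0

/-- `1 + a_{n-1} t + ⋯ + a_0 t^n`. -/
def Aser (n r : ℕ) : PowerSeries (R n r) :=
  ser n fun k => if h : 1 ≤ k ∧ k ≤ n then X (Sum.inl ⟨n - k, by omega⟩) else 0

/-- `1 + b_{r-1} t + ⋯ + b_0 t^r`. -/
def Bser (n r : ℕ) : PowerSeries (R n r) :=
  ser r fun k => if h : 1 ≤ k ∧ k ≤ r then X (Sum.inr ⟨r - k, by omega⟩) else 0

/-- `1 + d_{n-1} t + ⋯ + d_0 t^n`. -/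
def Dser (n r : ℕ) (d : Fin n → R n r) : PowerSeries (R n r) :=
  ser n fun k => if h : 1 ≤ k ∧ k ≤ n then d ⟨n - k, by omega⟩ else 0

/-- `1 + d_{n-1} t + ⋯ + d_1 t^{n-1}`. -/
def Dhatser (n r : ℕ) (d : Fin n → R n r) : PowerSeries (R n r) :=
  ser (n - 1) fun k => if h : 1 ≤ k ∧ k ≤ n - 1 then d ⟨n - k, by omega⟩ else 0

/-- `f(x) = x^n + a_{n-1}x^{n-1} + ⋯ + a_0`. -/
def fpoly (n r : ℕ) : Polynomial (R n r) :=
  Polynomial.X ^ n + ∑ i : Fin n, Polynomial.C (X (Sum.inl i)) * Polynomial.X ^ (i : ℕ)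

/-- `g(x) = x^r + b_{r-1}x^{r-1} + ⋯ + b_0`. -/
def gpoly (n r : ℕ) : Polynomial (R n r) :=
  Polynomial.X ^ r + ∑ j : Fin r, Polynomial.C (X (Sum.inr j)) * Polynomial.X ^ (j : ℕ)

/-- The coefficient `c_k` of `f·g`, for `0 ≤ k ≤ n+r-1`. -/
def cc (n r : ℕ) (k : Fin (n + r)) : R n r := (fpoly n r * gpoly n r).coeff (k : ℕ)

/-- `d_0, …, d_{n-1}` are the unique polynomials with
`(1 + b_{r-1}t + ⋯ + b_0 t^r)(1 + d_{n-1}t + ⋯ + d_0 t^n) ≡ 1 + a_{n-1}t + ⋯ + a_0 t^n (mod t^{n+1})`. -/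
def dSpec (n r : ℕ) (d : Fin n → R n r) : Prop :=
  ∀ k ≤ n, PowerSeries.coeff k (Bser n r * Dser n r d)
    = PowerSeries.coeff k (Aser n r)

/-- `ψ_i = d_i` for `0 ≤ i ≤ r-1`, and
`ψ_{s·r+i} = ∂^s d_{r-1} / (∂b_0^{s-1} ∂b_{r-1-i})` for `s ≥ 1`, `0 ≤ i ≤ r-1`. -/
def psi (n r : ℕ) (hr : 0 < r) (hrn : r ≤ n) (d : Fin n → R n r) (m : ℕ) : R n r :=
  if h : m < r then d ⟨m, by omega⟩
  else
    (fun q => pderiv (Sum.inr (⟨0, hr⟩ : Fin r)) q)^[m / r - 1]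
      (pderiv (Sum.inr (⟨r - 1 - m % r, by omega⟩ : Fin r)) (d ⟨r - 1, by omega⟩))

/-- The `m×m` lower shift matrix over `R n r`. -/
def Lmat (n r m : ℕ) : Matrix (Fin m) (Fin m) (R n r) :=
  Matrix.of fun i j => if (i : ℕ) = (j : ℕ) + 1 then 1 else 0

/-- `B = I_n + b_{r-1}L_n + ⋯ + b_0 L_n^r`. -/
def Bmat (n r : ℕ) (hr : 0 < r) : Matrix (Fin n) (Fin n) (R n r) :=
  1 + ∑ k ∈ Finset.range r, (X (Sum.inr (⟨r - 1 - k, by omega⟩ : Fin r)) : R n r) • Lmat n r n ^ (k + 1)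

/-- `D̂ = I_n + d_{n-1}L_n + ⋯ + d_1 L_n^{n-1}`. -/
def Dhat (n r : ℕ) (hn : 0 < n) (d : Fin n → R n r) : Matrix (Fin n) (Fin n) (R n r) :=
  1 + ∑ k ∈ Finset.range (n - 1), d ⟨n - 1 - k, by omega⟩ • Lmat n r n ^ (k + 1)

/-- `D`: the first `r` columns of `D̂`. -/
def Dmat (n r : ℕ) (hn : 0 < n) (hrn : r ≤ n) (d : Fin n → R n r) :
    Matrix (Fin n) (Fin r) (R n r) :=
  (Dhat n r hn d).submatrix id (Fin.castLE hrn)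

/-- `Â = I_n + a_{n-1}L_n + ⋯ + a_1 L_n^{n-1}`. -/
def Ahat (n r : ℕ) (hn : 0 < n) : Matrix (Fin n) (Fin n) (R n r) :=
  1 + ∑ k ∈ Finset.range (n - 1),
    (X (Sum.inl (⟨n - 1 - k, by omega⟩ : Fin n)) : R n r) • Lmat n r n ^ (k + 1)

/-- `A`: the first `r` columns of `Â`. -/
def Amat (n r : ℕ) (hn : 0 < n) (hrn : r ≤ n) : Matrix (Fin n) (Fin r) (R n r) :=
  (Ahat n r hn).submatrix id (Fin.castLE hrn)

/-- The Jacobian matrix of a family `p` of elements of `R n r`: the row of index `i` is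
`(∂p_i/∂a_{n-1}, …, ∂p_i/∂a_0, ∂p_i/∂b_{r-1}, …, ∂p_i/∂b_0)`. -/
def jac {n r : ℕ} {ι : Type*} (p : ι → R n r) : Matrix ι (Fin (n + r)) (R n r) :=
  Matrix.of fun i j =>
    if h : (j : ℕ) < n then pderiv (Sum.inl (⟨n - 1 - (j : ℕ), by omega⟩ : Fin n)) (p i)
    else
      pderiv (Sum.inr (⟨r - 1 - ((j : ℕ) - n), by have := j.isLt; omega⟩ : Fin r)) (p i)

/-- The set of all `k×k` minors of a matrix. -/
def minorsSet {n r : ℕ} {ι : Type*} (k : ℕ) (M : Matrix ι (Fin (n + r)) (R n r)) :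
    Set (R n r) :=
  { x | ∃ (ri : Fin k → ι) (ci : Fin k → Fin (n + r)), x = (M.submatrix ri ci).det }

/-- Evaluation at the origin `a_i = b_j = 0`. -/
def ev0 (n r : ℕ) : R n r →+* ℂ := eval fun _ => 0

/-- The maximal ideal `(a_0,…,a_{n-1},b_0,…,b_{r-1})`. -/
def mIdeal (n r : ℕ) : Ideal (R n r) :=
  Ideal.span (Set.range (X : (Fin n ⊕ Fin r) → R n r))

/-- `1 + g_1 t + ⋯ + g_{r_1} t^{r_1}` over `S = ℂ[g_1,…,g_{r_1},b_0,…,b_{r-1}] = R r1 r`,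
where `g_k` is the variable `Sum.inl ⟨k-1⟩`. -/
def Gser (r1 r : ℕ) : PowerSeries (R r1 r) :=
  ser r1 fun k => if h : 1 ≤ k ∧ k ≤ r1 then X (Sum.inl ⟨k - 1, by omega⟩) else 0

/-- `1 + w_{r-1} t + ⋯ + w_0 t^r`. -/
def Wser (r1 r : ℕ) (w : Fin r → R r1 r) : PowerSeries (R r1 r) :=
  ser r fun k => if h : 1 ≤ k ∧ k ≤ r then w ⟨r - k, by omega⟩ else 0

/-- `1 + w_{r-1} t + ⋯ + w_1 t^{r-1}`. -/
def Whatser (r1 r : ℕ) (w : Fin r → R r1 r) : PowerSeries (R r1 r) :=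
  ser (r - 1) fun k => if h : 1 ≤ k ∧ k ≤ r - 1 then w ⟨r - k, by omega⟩ else 0

/-- `w_0,…,w_{r-1}` are the unique polynomials with
`(1 + g_1 t + ⋯ + g_{r_1}t^{r_1})(1 + w_{r-1}t + ⋯ + w_0 t^r) ≡ 1 + b_{r-1}t + ⋯ + b_0 t^r
(mod t^{r+1})`. -/
def wSpec (r1 r : ℕ) (w : Fin r → R r1 r) : Prop :=
  ∀ k ≤ r, PowerSeries.coeff k (Gser r1 r * Wser r1 r w)
    = PowerSeries.coeff k (Bser r1 r)

/-- `φ'_i = w_i` for `0 ≤ i ≤ r_1-1`, and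
`φ'_{s·r_1+i} = ∂^s w_{r_1-1} / (∂g_{r_1}^{s-1} ∂g_{1+i})` for `s ≥ 1`, `0 ≤ i ≤ r_1-1`. -/
def phi' (r1 r : ℕ) (h1 : 0 < r1) (h2 : r1 < r) (w : Fin r → R r1 r) (m : ℕ) : R r1 r :=
  if h : m < r1 then w ⟨m, by omega⟩
  else
    (fun q => pderiv (Sum.inl (⟨r1 - 1, by omega⟩ : Fin r1)) q)^[m / r1 - 1]
      (pderiv (Sum.inl (⟨m % r1, Nat.mod_lt m h1⟩ : Fin r1)) (w ⟨r1 - 1, by omega⟩))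

/-- The substitution `g_k ↦ γ_{n-k}`, `b_j ↦ b_j`, from `S = R r1 r` to `R n r`. -/
def subst (n r r1 : ℕ) (γ : ℕ → R n r) : R r1 r →ₐ[ℂ] R n r :=
  aeval (Sum.elim (fun i : Fin r1 => γ (n - ((i : ℕ) + 1))) fun j : Fin r => X (Sum.inr j))


/-- From `n = q_1·r + r_1` with `q_1 ≥ 1` we get `r ≤ n`. -/
theorem rle (q1 r r1 n : ℕ) (hq1 : 1 ≤ q1) (hn : n = q1 * r + r1) : r ≤ n := by
  have := Nat.le_mul_of_pos_left r hq1
  omega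

end TB

namespace PowerSeries

section CoeffDerivation

variable {S A : Type*} [CommRing S] [CommRing A] [Algebra S A]

def coeffDerivation (δ : Derivation S A A) : Derivation S A⟦X⟧ A⟦X⟧ :=
  Derivation.mk'
    { toFun := fun f => PowerSeries.mk fun k => δ (coeff k f)
      map_add' := fun f g => by ext; simp
      map_smul' := fun s f => by ext; simp }
    fun f g => by
      ext k
      simp only [LinearMap.coe_mk, AddHom.coe_mk, coeff_mk, map_add, smul_eq_mul, coeff_mul,
        map_sum, Derivation.leibniz, Finset.sum_add_distrib, add_right_inj, mul_comm]
      rw [← Finset.Nat.sum_antidiagonal_swap]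
      simp only [Prod.fst_swap, Prod.snd_swap, mul_comm]

@[simp]
lemma coeff_coeffDerivation (δ : Derivation S A A) (f : A⟦X⟧) (k : ℕ) :
    coeff k (coeffDerivation δ f) = δ (coeff k f) := by
  simp [coeffDerivation]

lemma X_pow_dvd_coeffDerivation (δ : Derivation S A A) {m : ℕ} {f : A⟦X⟧} (h : X ^ m ∣ f) :
    X ^ m ∣ coeffDerivation δ f := by
  rw [X_pow_dvd_iff] at h ⊢
  intro k hk
  simp [h k hk]

lemma X_pow_dvd_coeffDerivation_add_of_X_pow_dvd_mul_sub (δ : Derivation S A A) {m : ℕ}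
    {B D P E : A⟦X⟧} (hE : B * E = 1) (hBD : X ^ m ∣ B * D - P)
    (hP : coeffDerivation δ P = 0) :
    X ^ m ∣ coeffDerivation δ D + E * coeffDerivation δ B * D := by
  have h := dvd_mul_of_dvd_right (X_pow_dvd_coeffDerivation δ hBD) E
  rw [map_sub, Derivation.leibniz, hP, smul_eq_mul, smul_eq_mul, sub_zero] at h
  convert h using 1
  linear_combination -(coeffDerivation δ D) * hE

end CoeffDerivation

lemma coeff_mem_of_coeff_mul_mem {A : Type*} [CommRing A] {I : Ideal A} {B C : A⟦X⟧}
    {r a b : ℕ} (hB₀ : constantCoeff B = 1) (hB : ∀ k, r < k → coeff k B = 0)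
    (hinit : ∀ k, a ≤ k → k < a + r → coeff k C ∈ I)
    (hBC : ∀ k, a + r ≤ k → k ≤ b → coeff k (B * C) ∈ I) :
    ∀ k, a ≤ k → k ≤ b → coeff k C ∈ I := by
  intro k
  induction k using Nat.strong_induction_on with
  | _ k ih =>
    intro hak hkb
    rcases lt_or_ge k (a + r) with hk | hk
    · exact hinit k hak hk
    have hsplit : coeff k (B * C) =
        ∑ p ∈ Finset.range k, coeff (p + 1) B * coeff (k - (p + 1)) C + coeff k C := by
      rw [coeff_mul, Finset.Nat.sum_antidiagonal_eq_sum_range_succ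
        (fun p q => coeff p B * coeff q C), Finset.sum_range_succ']
      simp [hB₀]
    have hrest : ∑ p ∈ Finset.range k, coeff (p + 1) B * coeff (k - (p + 1)) C ∈ I := by
      refine Ideal.sum_mem _ fun p hp => ?_
      rcases le_or_gt (p + 1) r with hpr | hpr
      · exact Ideal.mul_mem_left _ _
          (ih _ (by rw [Finset.mem_range] at hp; omega) (by omega) (by omega))
      · simp [hB _ hpr]
    simpa [hsplit] using I.sub_mem (hBC k hk hkb) hrest

section Toeplitz

variable {A : Type*} [CommRing A] (n : ℕ)

def toeplitz : A⟦X⟧ →ₐ[A] Matrix (Fin n) (Fin n) A where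
  toFun f := Matrix.of fun i j => if (j : ℕ) ≤ i then coeff (i - j : ℕ) f else 0
  map_one' := by
    ext i j
    simp only [Matrix.of_apply, Matrix.one_apply, coeff_one, Fin.ext_iff]
    split_ifs <;> first | rfl | omega
  map_mul' f g := by
    ext i j
    simp only [Matrix.mul_apply, Matrix.of_apply]
    rw [Fin.sum_univ_eq_sum_range (fun k =>
      (if k ≤ i then coeff (i - k) f else 0) * (if (j : ℕ) ≤ k then coeff (k - j) g else 0))]
    split_ifs with hji
    · have hsub : Finset.Ico (j : ℕ) (i + 1) ⊆ Finset.range n := fun k hk => by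
        simp only [Finset.mem_Ico, Finset.mem_range] at hk ⊢; omega
      rw [← Finset.sum_subset hsub fun k _ hk => ?_, Finset.sum_Ico_eq_sum_range, coeff_mul,
        ← Finset.Nat.sum_antidiagonal_swap]
      simp only [Prod.fst_swap, Prod.snd_swap]
      rw [Finset.Nat.sum_antidiagonal_eq_sum_range_succ
          (fun p q => coeff q f * coeff p g)]
      · refine Finset.sum_congr (by congr 1; omega) fun p hp => ?_
        simp only [Finset.mem_range] at hp
        rw [if_pos (by omega), if_pos (by omega), Nat.sub_sub, Nat.add_sub_cancel_left]
      · simp only [Finset.mem_Ico] at hk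
        split_ifs <;> first | omega | simp
    · refine (Finset.sum_eq_zero fun k _ => ?_).symm
      split_ifs <;> first | omega | simp
  map_zero' := by ext; simp
  map_add' f g := by ext; simp [ite_add_ite]
  commutes' a := by
    ext i j
    simp only [Matrix.of_apply, Matrix.algebraMap_matrix_apply, algebraMap_eq, coeff_C,
      Algebra.algebraMap_self, RingHom.id_apply, Fin.ext_iff]
    split_ifs <;> first | rfl | omega

lemma toeplitz_apply (f : A⟦X⟧) (i j : Fin n) :
    toeplitz n f i j = if (j : ℕ) ≤ i then coeff (i - j : ℕ) f else 0 :=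
  rfl

lemma toeplitz_eq_of_X_pow_dvd_sub {f g : A⟦X⟧} (h : X ^ n ∣ f - g) :
    toeplitz n f = toeplitz n g := by
  rw [X_pow_dvd_iff] at h
  ext i j
  simp only [toeplitz_apply]
  split_ifs
  · exact sub_eq_zero.mp (by simpa using h (i - j) (by omega))
  · rfl

end Toeplitz

end PowerSeries

namespace TB

open PowerSeries (coeffDerivation toeplitz)

lemma coeff_ser {A : Type*} [CommRing A] (m : ℕ) (cf : ℕ → A) (k : ℕ) :
    PowerSeries.coeff k (ser m cf) = if k = 0 then 1 else if k ≤ m then cf k else 0 :=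
  PowerSeries.coeff_mk _ _

lemma ser_eq_one_add_sum {A : Type*} [CommRing A] (m : ℕ) (cf : ℕ → A) :
    ser m cf = 1 + ∑ k ∈ Finset.range m, cf (k + 1) • PowerSeries.X ^ (k + 1) := by
  ext p
  rcases p with _ | p
  · simp [coeff_ser]
  · simp [coeff_ser, PowerSeries.coeff_X_pow]

lemma Lmat_eq_toeplitz (n r : ℕ) : Lmat n r n = toeplitz n PowerSeries.X := by
  ext i j
  simp only [Lmat, Matrix.of_apply, PowerSeries.toeplitz_apply, PowerSeries.coeff_X]
  split_ifs <;> first | rfl | omega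

lemma one_add_sum_smul_Lmat_pow_eq_toeplitz (n r m : ℕ) (cf : ℕ → R n r) :
    1 + ∑ k ∈ Finset.range m, cf (k + 1) • Lmat n r n ^ (k + 1) = toeplitz n (ser m cf) := by
  simp [ser_eq_one_add_sum, Lmat_eq_toeplitz]

lemma Bmat_eq_toeplitz (n r : ℕ) (hr : 0 < r) : Bmat n r hr = toeplitz n (Bser n r) := by
  rw [Bser, ← one_add_sum_smul_Lmat_pow_eq_toeplitz, Bmat]
  refine congrArg _ (Finset.sum_congr rfl fun k hk => ?_)
  rw [Finset.mem_range] at hk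
  rw [dif_pos (by omega)]
  congr 4
  omega

lemma X_pow_dvd_Dser_sub_Dhatser (n r : ℕ) (d : Fin n → R n r) :
    PowerSeries.X ^ n ∣ Dser n r d - Dhatser n r d := by
  rw [PowerSeries.X_pow_dvd_iff]
  intro k hk
  simp only [map_sub, Dser, Dhatser, coeff_ser]
  split_ifs <;> first | omega | simp

lemma Dhat_eq_toeplitz (n r : ℕ) (hn : 0 < n) (d : Fin n → R n r) :
    Dhat n r hn d = toeplitz n (Dser n r d) := by
  rw [PowerSeries.toeplitz_eq_of_X_pow_dvd_sub n (X_pow_dvd_Dser_sub_Dhatser n r d), Dhatser,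
    ← one_add_sum_smul_Lmat_pow_eq_toeplitz, Dhat]
  refine congrArg _ (Finset.sum_congr rfl fun k hk => ?_)
  rw [Finset.mem_range] at hk
  rw [dif_pos (by omega)]
  congr 3
  omega

lemma constantCoeff_Bser (n r : ℕ) : PowerSeries.constantCoeff (Bser n r) = 1 := by
  simp [← PowerSeries.coeff_zero_eq_constantCoeff_apply, Bser, coeff_ser]

lemma coeff_Bser_of_lt (n r : ℕ) {k : ℕ} (hk : r < k) : PowerSeries.coeff k (Bser n r) = 0 := by
  simp only [Bser, coeff_ser]
  split_ifs <;> first | omega | rfl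

lemma coeff_Dser_sub (n r : ℕ) (d : Fin n → R n r) (i : Fin n) :
    PowerSeries.coeff (n - i) (Dser n r d) = d i := by
  simp only [Dser, coeff_ser]
  rw [if_neg (by omega), if_pos (by omega), dif_pos (by omega)]
  congr 1
  ext
  simp only
  omega

lemma X_pow_dvd_Bser_mul_Dser_sub_Aser {n r : ℕ} {d : Fin n → R n r} (hd : dSpec n r d) :
    PowerSeries.X ^ (n + 1) ∣ Bser n r * Dser n r d - Aser n r := by
  rw [PowerSeries.X_pow_dvd_iff]
  intro k hk
  rw [map_sub, hd k (by omega), sub_self]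

lemma coeffDerivation_pderiv_Aser (n r : ℕ) (j : Fin r) :
    coeffDerivation (pderiv (Sum.inr j)) (Aser n r) = 0 := by
  ext k : 1
  simp only [PowerSeries.coeff_coeffDerivation, Aser, coeff_ser, map_zero]
  split_ifs <;> simp

lemma coeffDerivation_pderiv_Bser (n r : ℕ) (j : Fin r) :
    coeffDerivation (pderiv (Sum.inr j)) (Bser n r) = PowerSeries.X ^ (r - j) := by
  ext k : 1
  simp only [PowerSeries.coeff_coeffDerivation, Bser, coeff_ser, PowerSeries.coeff_X_pow]
  split_ifs <;> simp [pderiv_X, Pi.single_apply, Fin.ext_iff] <;> omega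

lemma pderiv_inr_eq_neg_coeff {n r : ℕ} {d : Fin n → R n r} (hd : dSpec n r d)
    {E : PowerSeries (R n r)} (hE : Bser n r * E = 1) (i : Fin n) (j : Fin r) :
    pderiv (Sum.inr j) (d i) =
      -PowerSeries.coeff (n - i) (PowerSeries.X ^ (r - j) * (E * Dser n r d)) := by
  have h := PowerSeries.X_pow_dvd_coeffDerivation_add_of_X_pow_dvd_mul_sub (pderiv (Sum.inr j))
    hE (X_pow_dvd_Bser_mul_Dser_sub_Aser hd) (coeffDerivation_pderiv_Aser n r j)
  rw [coeffDerivation_pderiv_Bser, PowerSeries.X_pow_dvd_iff] at h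
  have hi := h (n - i) (by omega)
  rw [map_add, PowerSeries.coeff_coeffDerivation, coeff_Dser_sub,
    show E * PowerSeries.X ^ (r - j) * Dser n r d
      = PowerSeries.X ^ (r - j) * (E * Dser n r d) by ring] at hi
  exact eq_neg_of_add_eq_zero_left hi

lemma coeff_inv_mul_Dser_mem_span {n r : ℕ} {d : Fin n → R n r} (hd : dSpec n r d)
    {E : PowerSeries (R n r)} (hE : Bser n r * E = 1) (hr : 0 < r) (h2r : 2 * r ≤ n) :
    ∀ k, n + 1 - 2 * r ≤ k → k ≤ n - 1 → PowerSeries.coeff k (E * Dser n r d) ∈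
      Ideal.span ((Set.range fun j : Fin r => pderiv (Sum.inr j) (d ⟨r - 1, by omega⟩))
        ∪ d '' {k : Fin n | 1 ≤ (k : ℕ) ∧ (k : ℕ) ≤ r - 1}) := by
  refine PowerSeries.coeff_mem_of_coeff_mul_mem (constantCoeff_Bser n r)
    (fun k hk => coeff_Bser_of_lt n r hk) (fun k hk₁ hk₂ => ?_) (fun k hk₁ hk₂ => ?_)
  · have e := pderiv_inr_eq_neg_coeff hd hE ⟨r - 1, by omega⟩ ⟨k - (n + 1 - 2 * r), by omega⟩
    rw [PowerSeries.coeff_X_pow_mul', if_pos (by dsimp only; omega),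
      show n - (r - 1) - (r - (k - (n + 1 - 2 * r))) = k by omega] at e
    rw [neg_eq_iff_eq_neg.mp e.symm]
    exact neg_mem (Ideal.subset_span (Or.inl ⟨_, rfl⟩))
  · rw [← mul_assoc, hE, one_mul,
      show k = n - (⟨n - k, by omega⟩ : Fin n) by dsimp only; omega, coeff_Dser_sub]
    exact Ideal.subset_span (Or.inr ⟨_, ⟨by dsimp only; omega, by dsimp only; omega⟩, rfl⟩)

/-- Lemma 3.3: (i) `Q = `first `r` columns of `-B⁻¹·D̂`; in particular
`∂d_i/∂b_j` depends only on `i - j`; (ii) if `q_1 ≥ 2` then each `∂d_i/∂b_j` (`i,j < r`) lies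
in the ideal generated by the `∂d_{r-1}/∂b_j` and `d_1,…,d_{r-1}`. -/
theorem stmt4 (n r q1 r1 : ℕ) (hq1 : 1 ≤ q1) (h1 : 0 < r1) (h2 : r1 < r)
    (hn : n = q1 * r + r1)
    (d : Fin n → R n r) (hd : dSpec n r d) :
    ((Matrix.of fun (i : Fin n) (j : Fin r) =>
        pderiv (Sum.inr (⟨r - 1 - (j : ℕ), by omega⟩ : Fin r)) (d ⟨n - 1 - (i : ℕ), by omega⟩))
      = (-((Bmat n r (by omega))⁻¹ * Dhat n r (by omega) d)).submatrix id
          (Fin.castLE (rle q1 r r1 n (by omega) hn)))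
    ∧ (∀ (i i' : Fin n) (j j' : Fin r), (i : ℤ) - (j : ℤ) = (i' : ℤ) - (j' : ℤ) →
        pderiv (Sum.inr j) (d i) = pderiv (Sum.inr j') (d i'))
    ∧ (2 ≤ q1 → ∀ i j : Fin r,
        pderiv (Sum.inr j) (d (Fin.castLE (rle q1 r r1 n (by omega) hn) i)) ∈
          Ideal.span ((Set.range fun j' : Fin r =>
              pderiv (Sum.inr j') (d ⟨r - 1, by have := rle q1 r r1 n (by omega) hn; omega⟩))
            ∪ d '' {k : Fin n | 1 ≤ (k : ℕ) ∧ (k : ℕ) ≤ r - 1})) := by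
  have hrn : r ≤ n := rle q1 r r1 n hq1 hn
  obtain ⟨E, hE⟩ : ∃ E, Bser n r * E = 1 :=
    ⟨_, PowerSeries.mul_invOfUnit _ 1 (by simp [constantCoeff_Bser])⟩
  have hpd := pderiv_inr_eq_neg_coeff hd hE
  refine ⟨?_, fun i i' j j' hij => ?_, fun hq2 i j => ?_⟩
  · have hBinv : (Bmat n r (by omega))⁻¹ = toeplitz n E :=
      Matrix.inv_eq_right_inv (by rw [Bmat_eq_toeplitz, ← map_mul, hE, map_one])
    refine Matrix.ext fun i j => ?_
    rw [hBinv, Dhat_eq_toeplitz, ← map_mul]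
    simp only [Matrix.of_apply, Matrix.submatrix_apply, id, Matrix.neg_apply,
      PowerSeries.toeplitz_apply, Fin.val_castLE, hpd, PowerSeries.coeff_X_pow_mul']
    rw [show n - (n - 1 - i) - (r - (r - 1 - j)) = i - j by omega]
    split_ifs <;> first | rfl | omega
  · simp only [hpd, PowerSeries.coeff_X_pow_mul']
    rw [show n - i - (r - j) = n - i' - (r - j') by omega]
    split_ifs <;> first | rfl | omega
  · have h2r : 2 * r ≤ n := by nlinarith
    rw [hpd, PowerSeries.coeff_X_pow_mul', if_pos (by simp only [Fin.val_castLE]; omega)]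
    refine neg_mem (coeff_inv_mul_Dser_mem_span hd hE (by omega) h2r _ ?_ ?_) <;>
      simp only [Fin.val_castLE] <;> omega

end TB
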